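/- arXiv:math/0702662 — 2 statements merged into one kernel-verified Lean document; each statement's English description precedes it below -/
import Mathlib

section
/- For every B > 0 there is a constant C > 0, depending only on W and B (and not on ε), such that: for every ε > 0 and every u ∈ C²(closure(B₁); ℝ²) satisfying −Δu + ∇W(u)/(2ε²) = 0 in B₁ and sup_{x ∈ ∂B₁} |u(x)| ≤ B, one has sup_{x ∈ B₁} |u(x)| ≤ C. -/
noncomputable section

open Real MeasureTheory Filter Metric Topology

abbrev E2 : Type := EuclideanSpace ℝ (Fin 2)

def pt (a b : ℝ) : E2 := (EuclideanSpace.equiv (Fin 2) ℝ).symm ![a, b]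

def lapl (f : E2 → E2) (x : E2) : E2 :=
  ∑ i : Fin 2, fderiv ℝ (fun y => fderiv ℝ f y (EuclideanSpace.single i 1)) x
      (EuclideanSpace.single i 1)

def hessQF (W : E2 → ℝ) (u v : E2) : ℝ := iteratedFDeriv ℝ 2 W u ![v, v]

def frobSq (L : E2 →L[ℝ] E2) : ℝ :=
  ∑ i : Fin 2, ∑ j : Fin 2, (L (EuclideanSpace.single j 1) i) ^ 2

def frobNorm (L : E2 →L[ℝ] E2) : ℝ := Real.sqrt (frobSq L)

/-- A potential as in the appendix: proper, C², bounded below, finitely many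
critical points, Hessian psd outside a ball. -/
structure WPot where
  W : E2 → ℝ
  W_smooth : ContDiff ℝ 2 W
  W_proper : ∀ K : Set ℝ, IsCompact K → IsCompact (W ⁻¹' K)
  W_bddBelow : ∃ m : ℝ, ∀ u : E2, m ≤ W u
  crit_finite : {u : E2 | gradient W u = 0}.Finite
  K₀ : ℝ
  K₀_pos : 0 < K₀
  hess_psd : ∀ u : E2, K₀ ≤ ‖u‖ → ∀ v : E2, 0 ≤ hessQF W u v

local notation "⟪" x ", " y "⟫" => @inner ℝ _ _ x y

/-- 1-d second derivative test at a local maximum. -/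
lemma secondDeriv_nonpos_of_isLocalMax1d {g h : ℝ → ℝ} {D : ℝ}
    (hg : ∀ᶠ t in 𝓝 (0:ℝ), HasDerivAt g (h t) t)
    (hh : HasDerivAt h D 0) (hmax : IsLocalMax g 0) : D ≤ 0 := by
  by_contra hD
  push_neg at hD
  have h0 : h 0 = 0 := hmax.hasDerivAt_eq_zero hg.self_of_nhds
  have hslope : Tendsto (slope h 0) (𝓝[≠] 0) (𝓝 D) :=
    hasDerivAt_iff_tendsto_slope.mp hh
  have hpos : ∀ᶠ t in 𝓝[≠] (0:ℝ), 0 < slope h 0 t :=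
    hslope.eventually (eventually_gt_nhds hD)
  have hpos' : ∀ᶠ t in 𝓝 (0:ℝ), t ≠ 0 → 0 < slope h 0 t := by
    simpa only [eventually_nhdsWithin_iff, Set.mem_compl_iff, Set.mem_singleton_iff] using hpos
  have hmax' : ∀ᶠ t in 𝓝 (0:ℝ), g t ≤ g 0 := hmax
  obtain ⟨δ, hδ, hball⟩ := Metric.eventually_nhds_iff.mp ((hg.and hpos').and hmax')
  have hb : ∀ t : ℝ, |t| < δ →
      (HasDerivAt g (h t) t ∧ (t ≠ 0 → 0 < slope h 0 t)) ∧ g t ≤ g 0 := by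
    intro t ht; exact hball (by simpa [Real.dist_eq] using ht)
  set b := δ/2 with hbdef
  have hbpos : 0 < b := by positivity
  have hbδ : b < δ := by simp [hbdef]; linarith
  have hmono : StrictMonoOn g (Set.Icc 0 b) := by
    apply strictMonoOn_of_deriv_pos (convex_Icc 0 b)
    · intro t ht
      have : |t| < δ := by
        rw [abs_lt]; constructor <;> [linarith [ht.1]; linarith [ht.2]]
      exact ((hb t this).1.1.continuousAt).continuousWithinAt
    · intro t ht
      rw [interior_Icc] at ht
      have h1 : |t| < δ := by
        rw [abs_lt]; constructor <;> [linarith [ht.1]; linarith [ht.2]]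
      have h2 := (hb t h1).1
      rw [h2.1.deriv]
      have := h2.2 (ne_of_gt ht.1)
      rw [slope_def_field] at this
      rw [div_pos_iff] at this
      rcases this with ⟨hn, _⟩ | ⟨_, hd⟩
      · simpa [h0] using hn
      · simp at hd; linarith [ht.1]
  have h1 : g 0 < g b :=
    hmono (Set.left_mem_Icc.mpr hbpos.le) (Set.right_mem_Icc.mpr hbpos.le) hbpos
  have h2 : g b ≤ g 0 := (hb b (by rwa [abs_of_pos hbpos])).2
  linarith

/-- Directional second derivative test at a local maximum, in `E2`. -/
lemma key1d {F : E2 → ℝ} {x₀ : E2}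
    (hF : ContDiffAt ℝ 2 F x₀) (hmax : IsLocalMax F x₀) (v : E2) :
    fderiv ℝ (fun y => fderiv ℝ F y v) x₀ v ≤ 0 := by
  set A : E2 → ℝ := fun y => fderiv ℝ F y v with hA
  set line : ℝ → E2 := fun t => x₀ + t • v with hline
  have hline0 : line 0 = x₀ := by simp [hline]
  have hlineD : ∀ t : ℝ, HasDerivAt line v t := by
    intro t
    simpa [hline] using ((hasDerivAt_id t).smul_const v).const_add x₀
  have hlinec : Continuous line := by fun_prop
  have hAd : DifferentiableAt ℝ A x₀ := by
    have h1 : ContDiffAt ℝ 1 (fderiv ℝ F) x₀ := hF.fderiv_right (by norm_num)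
    exact (h1.differentiableAt one_ne_zero).clm_apply (differentiableAt_const v)
  have hg : ∀ᶠ t in 𝓝 (0:ℝ), HasDerivAt (F ∘ line) (A (line t)) t := by
    have hev : ∀ᶠ y in 𝓝 x₀, DifferentiableAt ℝ F y :=
      (hF.eventually (by norm_num)).mono fun y hy => hy.differentiableAt (by norm_num)
    have : ∀ᶠ t in 𝓝 (0:ℝ), DifferentiableAt ℝ F (line t) := by
      have := hlinec.tendsto 0
      rw [hline0] at this
      exact this.eventually hev
    filter_upwards [this] with t ht
    exact ht.hasFDerivAt.comp_hasDerivAt t (hlineD t)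
  have hh : HasDerivAt (A ∘ line) (fderiv ℝ A x₀ v) 0 := by
    have hAd' : HasFDerivAt A (fderiv ℝ A x₀) (line 0) := hline0 ▸ hAd.hasFDerivAt
    exact hAd'.comp_hasDerivAt 0 (hlineD 0)
  have hmax' : IsLocalMax (F ∘ line) 0 := by
    have ht : Tendsto line (𝓝 0) (𝓝 x₀) := by
      have := hlinec.tendsto 0; rwa [hline0] at this
    have := ht.eventually hmax
    simpa [IsLocalMax, IsMaxFilter, hline0] using this
  exact secondDeriv_nonpos_of_isLocalMax1d hg hh hmax'

/-- Second derivative of `‖u·‖² + ‖·‖²` along a direction. -/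
lemma second_deriv_formula {u : E2 → E2} {x₀ : E2} (hcd : ContDiffAt ℝ 2 u x₀) (v : E2) :
    fderiv ℝ (fun y => fderiv ℝ (fun z => (⟪u z, u z⟫ + ⟪z, z⟫ : ℝ)) y v) x₀ v
      = 2*‖fderiv ℝ u x₀ v‖^2
        + 2*⟪u x₀, fderiv ℝ (fun y => fderiv ℝ u y v) x₀ v⟫ + 2*‖v‖^2 := by
  set A : E2 → E2 := fun y => fderiv ℝ u y v with hA
  set G : E2 → ℝ := fun y => 2*⟪u y, A y⟫ + 2*⟪y, v⟫ with hG
  have hAd : DifferentiableAt ℝ A x₀ := by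
    have h1 : ContDiffAt ℝ 1 (fderiv ℝ u) x₀ := hcd.fderiv_right (by norm_num)
    exact (h1.differentiableAt one_ne_zero).clm_apply (differentiableAt_const v)
  have hud : DifferentiableAt ℝ u x₀ := hcd.differentiableAt (by norm_num)
  have hev : ∀ᶠ y in 𝓝 x₀, fderiv ℝ (fun z => (⟪u z, u z⟫ + ⟪z, z⟫ : ℝ)) y v = G y := by
    have hdiff : ∀ᶠ y in 𝓝 x₀, DifferentiableAt ℝ u y :=
      (hcd.eventually (by norm_num)).mono fun y hy => hy.differentiableAt (by norm_num)
    filter_upwards [hdiff] with y hy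
    have h1 := (hy.hasFDerivAt.inner ℝ hy.hasFDerivAt)
    have h2 := ((hasFDerivAt_id y).inner ℝ (hasFDerivAt_id y))
    have h3 : HasFDerivAt (fun z => (⟪u z, u z⟫ + ⟪z, z⟫ : ℝ))
        ((fderivInnerCLM ℝ (u y, u y)).comp ((fderiv ℝ u y).prod (fderiv ℝ u y)) +
          (fderivInnerCLM ℝ ((id y : E2), (id y : E2))).comp
            ((ContinuousLinearMap.id ℝ E2).prod (ContinuousLinearMap.id ℝ E2))) y := by
      exact h1.add h2
    rw [h3.fderiv]
    simp only [hG, ContinuousLinearMap.add_apply, ContinuousLinearMap.comp_apply,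
      ContinuousLinearMap.prod_apply, fderivInnerCLM_apply, ContinuousLinearMap.coe_id',
      id_eq, hA]
    rw [real_inner_comm (fderiv ℝ u y v) (u y), real_inner_comm v y]
    ring
  rw [Filter.EventuallyEq.fderiv_eq hev]
  have hinner1 : HasFDerivAt (fun y => (⟪u y, A y⟫ : ℝ))
      ((fderivInnerCLM ℝ (u x₀, A x₀)).comp ((fderiv ℝ u x₀).prod (fderiv ℝ A x₀))) x₀ :=
    hud.hasFDerivAt.inner ℝ hAd.hasFDerivAt
  have hinner2 : HasFDerivAt (fun y : E2 => (⟪y, v⟫ : ℝ))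
      ((fderivInnerCLM ℝ ((id x₀ : E2), v)).comp
        ((ContinuousLinearMap.id ℝ E2).prod 0)) x₀ :=
    (hasFDerivAt_id x₀).inner ℝ (hasFDerivAt_const v x₀)
  have hG' : HasFDerivAt G
      ((2:ℝ) • ((fderivInnerCLM ℝ (u x₀, A x₀)).comp ((fderiv ℝ u x₀).prod (fderiv ℝ A x₀)))
        + (2:ℝ) • ((fderivInnerCLM ℝ ((id x₀ : E2), v)).comp
            ((ContinuousLinearMap.id ℝ E2).prod 0))) x₀ := by
    have := ((hinner1.const_smul (2:ℝ)).add (hinner2.const_smul (2:ℝ)))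
    exact this.congr_of_eventuallyEq (Filter.Eventually.of_forall fun y => by
      simp [hG, smul_eq_mul])
  rw [hG'.fderiv]
  simp only [ContinuousLinearMap.add_apply, ContinuousLinearMap.smul_apply,
    ContinuousLinearMap.comp_apply, ContinuousLinearMap.prod_apply, fderivInnerCLM_apply,
    ContinuousLinearMap.zero_apply, ContinuousLinearMap.id_apply, id_eq, smul_eq_mul]
  have e1 : ⟪fderiv ℝ u x₀ v, A x₀⟫ = ‖fderiv ℝ u x₀ v‖^2 := by
    rw [hA]; exact real_inner_self_eq_norm_sq _
  have e2 : (⟪v, v⟫ : ℝ) = ‖v‖^2 := real_inner_self_eq_norm_sq _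
  rw [e1, e2]
  simp only [inner_zero_right]
  ring

/-- Outside a large ball the gradient of `W` points outward. -/
lemma wpot_radial (S : WPot) : ∃ R : ℝ, S.K₀ < R ∧
    ∀ p : E2, R ≤ ‖p‖ → 0 ≤ fderiv ℝ S.W p p := by
  obtain ⟨m, hm⟩ := S.W_bddBelow
  have hd1 : Differentiable ℝ S.W := S.W_smooth.differentiable (by norm_num)
  have hd2 : Differentiable ℝ (fderiv ℝ S.W) :=
    (S.W_smooth.fderiv_right (m := 1) (by norm_num)).differentiable one_ne_zero
  have hsph : IsCompact (sphere (0:E2) S.K₀) := isCompact_sphere 0 S.K₀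
  have hsphne : (sphere (0:E2) S.K₀).Nonempty := by
    rw [NormedSpace.sphere_nonempty]; exact S.K₀_pos.le
  obtain ⟨q₀, _, hq₀⟩ := hsph.exists_isMaxOn hsphne (S.W_smooth.continuous.continuousOn)
  set A := S.W q₀ with hAdef
  have hcomp : IsCompact (S.W ⁻¹' Set.Icc m A) := S.W_proper _ isCompact_Icc
  obtain ⟨R₀, hR₀⟩ := hcomp.isBounded.subset_closedBall 0
  set R := max (R₀ + 1) (S.K₀ + 1) with hRdef
  have hRK : S.K₀ < R := lt_of_lt_of_le (by linarith [S.K₀_pos]) (le_max_right _ _)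
  refine ⟨R, hRK, fun p hp => ?_⟩
  have hpnorm : 0 < ‖p‖ := lt_of_lt_of_le (lt_trans S.K₀_pos hRK) hp
  set r := ‖p‖ with hrdef
  set ω : E2 := ‖p‖⁻¹ • p with hωdef
  have hωnorm : ‖ω‖ = 1 := by
    rw [hωdef, norm_smul, norm_inv, norm_norm, inv_mul_cancel₀ (ne_of_gt hpnorm)]
  have hsmul : ∀ t : ℝ, 0 ≤ t → ‖t • ω‖ = t := by
    intro t ht; rw [norm_smul, hωnorm, mul_one, Real.norm_eq_abs, abs_of_nonneg ht]
  have hrω : r • ω = p := by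
    rw [hrdef, hωdef, smul_smul, mul_inv_cancel₀ (ne_of_gt hpnorm), one_smul]
  set h : ℝ → ℝ := fun t => fderiv ℝ S.W (t • ω) ω with hhdef
  have hhD : ∀ t : ℝ, HasDerivAt h (fderiv ℝ (fderiv ℝ S.W) (t • ω) ω ω) t := by
    intro t
    have hlineD : HasDerivAt (fun s : ℝ => s • ω) ω t := by
      simpa using (hasDerivAt_id t).smul_const ω
    have hAd : HasFDerivAt (fun y => fderiv ℝ S.W y ω)
        ((fderiv ℝ (fderiv ℝ S.W) (t • ω)).flip ω) (t • ω) := by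
      have h1 := ((hd2 (t • ω)).hasFDerivAt).clm_apply (hasFDerivAt_const ω (t • ω))
      simpa using h1
    have := hAd.comp_hasDerivAt t hlineD
    exact this
  have hderiv_nonneg : ∀ t : ℝ, S.K₀ ≤ t → 0 ≤ fderiv ℝ (fderiv ℝ S.W) (t • ω) ω ω := by
    intro t ht
    have hnorm : S.K₀ ≤ ‖t • ω‖ := by
      rw [hsmul t (le_trans S.K₀_pos.le ht)]; exact ht
    have := S.hess_psd (t • ω) hnorm ω
    rwa [hessQF, iteratedFDeriv_two_apply] at this
  have hmono : MonotoneOn h (Set.Ici S.K₀) := by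
    refine monotoneOn_of_deriv_nonneg (convex_Ici S.K₀)
      (fun t _ => ((hhD t).continuousAt).continuousWithinAt)
      (fun t _ => ((hhD t).differentiableAt).differentiableWithinAt) ?_
    intro t ht
    rw [interior_Ici] at ht
    rw [(hhD t).deriv]
    exact hderiv_nonneg t (le_of_lt ht)
  set g : ℝ → ℝ := fun t => S.W (t • ω) with hgdef
  have hgD : ∀ t : ℝ, HasDerivAt g (h t) t := by
    intro t
    have hlineD : HasDerivAt (fun s : ℝ => s • ω) ω t := by
      simpa using (hasDerivAt_id t).smul_const ω
    exact (hd1 (t • ω)).hasFDerivAt.comp_hasDerivAt t hlineD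
  have hKr : S.K₀ < r := lt_of_lt_of_le hRK hp
  obtain ⟨c, hc, hceq⟩ := exists_hasDerivAt_eq_slope g h hKr
    (fun t _ => (hgD t).continuousAt.continuousWithinAt) (fun t _ => hgD t)
  have hWp : A ≤ S.W p := by
    by_contra hWp
    push_neg at hWp
    have hmem : p ∈ S.W ⁻¹' Set.Icc m A := ⟨hm p, hWp.le⟩
    have h1 := mem_closedBall.mp (hR₀ hmem)
    rw [dist_zero_right] at h1
    have : R₀ + 1 ≤ ‖p‖ := le_trans (le_max_left _ _) hp
    linarith
  have hWK : g S.K₀ ≤ A := by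
    apply hq₀
    rw [mem_sphere_zero_iff_norm]
    exact hsmul S.K₀ S.K₀_pos.le
  have hcK : S.K₀ ≤ c := hc.1.le
  have hslope : 0 ≤ h c := by
    rw [hceq]
    apply div_nonneg _ (by linarith)
    have : g r = S.W p := by rw [hgdef]; simp only [hrω]
    rw [this]
    linarith
  have hhr : 0 ≤ h r :=
    le_trans hslope (hmono (Set.mem_Ici.mpr hcK) (Set.mem_Ici.mpr (le_of_lt hKr)) hc.2.le)
  have heq : fderiv ℝ S.W p p = r * h r := by
    have h1 : h r = fderiv ℝ S.W p ω := by rw [hhdef]; simp only [hrω]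
    rw [h1]
    calc fderiv ℝ S.W p p = fderiv ℝ S.W p (r • ω) := congrArg _ hrω.symm
      _ = r * fderiv ℝ S.W p ω := by rw [ContinuousLinearMap.map_smul, smul_eq_mul]
  rw [heq]
  exact mul_nonneg hpnorm.le hhr

theorem statement4 (S : WPot) : ∀ B : ℝ, 0 < B → ∃ C : ℝ, 0 < C ∧
    ∀ ε : ℝ, 0 < ε → ∀ u : E2 → E2, ContDiffOn ℝ 2 u (closedBall (0:E2) 1) →
      (∀ x ∈ ball (0:E2) 1,
        -lapl u x + (1 / (2 * ε ^ 2)) • gradient S.W (u x) = 0) →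
      (∀ x : E2, ‖x‖ = 1 → ‖u x‖ ≤ B) →
      ∀ x ∈ ball (0:E2) 1, ‖u x‖ ≤ C := by
  intro B hB
  obtain ⟨R, hRK, hR⟩ := wpot_radial S
  have hRpos : 0 < R := lt_trans S.K₀_pos hRK
  refine ⟨max B R + 1, by positivity, ?_⟩
  intro ε hε u hu hpde hbd
  by_contra hcon
  push_neg at hcon
  obtain ⟨xs, hxs, hxsC⟩ := hcon
  set C := max B R + 1 with hCdef
  have hCB : B + 1 ≤ C := by simp [hCdef]
  have hCR : R + 1 ≤ C := by simp [hCdef]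
  have hCpos : 0 < C := by positivity
  set Fn : E2 → ℝ := fun y => (⟪u y, u y⟫ + ⟪y, y⟫ : ℝ) with hFn
  have hFnval : ∀ y, Fn y = ‖u y‖^2 + ‖y‖^2 := by
    intro y; rw [hFn]; simp only [real_inner_self_eq_norm_sq]
  have hFc : ContinuousOn Fn (closedBall (0:E2) 1) :=
    (hu.continuousOn.inner hu.continuousOn).add
      ((continuous_id.inner continuous_id).continuousOn)
  obtain ⟨x₀, hx₀mem, hx₀max⟩ := (isCompact_closedBall (0:E2) 1).exists_isMaxOn
    ⟨0, mem_closedBall_self zero_le_one⟩ hFc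
  have hxsmem : xs ∈ closedBall (0:E2) 1 := ball_subset_closedBall hxs
  have hFxs : C^2 + ‖xs‖^2 < Fn xs := by
    rw [hFnval]
    have : C^2 < ‖u xs‖^2 := by nlinarith [norm_nonneg (u xs)]
    linarith
  have hFmax_xs : Fn xs ≤ Fn x₀ := hx₀max hxsmem
  have hx₀le : ‖x₀‖ ≤ 1 := mem_closedBall_zero_iff.mp hx₀mem
  have hx₀lt : ‖x₀‖ < 1 := by
    rcases lt_or_eq_of_le hx₀le with h | h
    · exact h
    · exfalso
      have hub := hbd x₀ h
      have h1 : Fn x₀ = ‖u x₀‖^2 + 1 := by rw [hFnval, h]; ring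
      nlinarith [norm_nonneg (u x₀), norm_nonneg xs, norm_nonneg (u xs)]
  have hx₀ball : x₀ ∈ ball (0:E2) 1 := mem_ball_zero_iff.mpr hx₀lt
  have hnb : closedBall (0:E2) 1 ∈ 𝓝 x₀ :=
    mem_nhds_iff.mpr ⟨ball 0 1, ball_subset_closedBall, isOpen_ball, hx₀ball⟩
  have hmax : IsLocalMax Fn x₀ := Filter.eventually_of_mem hnb fun y hy => hx₀max hy
  have hcd : ContDiffAt ℝ 2 u x₀ := hu.contDiffAt hnb
  have hFcd : ContDiffAt ℝ 2 Fn x₀ :=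
    (hcd.inner ℝ hcd).add (contDiffAt_id.inner ℝ contDiffAt_id)
  -- ‖u x₀‖ is large
  have hRx₀ : R ≤ ‖u x₀‖ := by
    by_contra hcon2
    push_neg at hcon2
    have h1 : ‖u x₀‖^2 + ‖x₀‖^2 = Fn x₀ := (hFnval x₀).symm
    nlinarith [norm_nonneg (u x₀), norm_nonneg xs, norm_nonneg x₀]
  -- the PDE at x₀
  have hlap : lapl u x₀ = (1 / (2 * ε ^ 2)) • gradient S.W (u x₀) :=
    neg_add_eq_zero.mp (hpde x₀ hx₀ball)
  have hip : 0 ≤ ⟪u x₀, lapl u x₀⟫ := by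
    rw [hlap, real_inner_smul_right]
    apply mul_nonneg (by positivity)
    have hgrad : ⟪u x₀, gradient S.W (u x₀)⟫ = fderiv ℝ S.W (u x₀) (u x₀) := by
      rw [real_inner_comm]
      exact InnerProductSpace.toDual_symm_apply
    rw [hgrad]
    exact hR (u x₀) hRx₀
  -- second derivative test in each coordinate direction
  have hterm : ∀ i : Fin 2,
      2*‖fderiv ℝ u x₀ (EuclideanSpace.single i 1)‖^2
        + 2*⟪u x₀, fderiv ℝ (fun y => fderiv ℝ u y (EuclideanSpace.single i 1)) x₀
            (EuclideanSpace.single i 1)⟫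
        + 2*‖(EuclideanSpace.single i 1 : E2)‖^2 ≤ 0 := by
    intro i
    have := key1d hFcd hmax (EuclideanSpace.single i 1)
    rwa [second_deriv_formula hcd (EuclideanSpace.single i 1)] at this
  have hnorm_single : ∀ i : Fin 2, ‖(EuclideanSpace.single i (1:ℝ) : E2)‖ = 1 := by
    intro i; rw [EuclideanSpace.norm_single]; norm_num
  have hlapl2 : lapl u x₀ =
      fderiv ℝ (fun y => fderiv ℝ u y (EuclideanSpace.single 0 1)) x₀
        (EuclideanSpace.single 0 1) +
      fderiv ℝ (fun y => fderiv ℝ u y (EuclideanSpace.single 1 1)) x₀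
        (EuclideanSpace.single 1 1) := by
    rw [lapl, Fin.sum_univ_two]
  have ht0 := hterm 0
  have ht1 := hterm 1
  rw [hnorm_single] at ht0 ht1
  have hsum : ⟪u x₀, fderiv ℝ (fun y => fderiv ℝ u y (EuclideanSpace.single 0 1)) x₀
        (EuclideanSpace.single 0 1)⟫ +
      ⟪u x₀, fderiv ℝ (fun y => fderiv ℝ u y (EuclideanSpace.single 1 1)) x₀
        (EuclideanSpace.single 1 1)⟫ = ⟪u x₀, lapl u x₀⟫ := by
    rw [hlapl2, inner_add_right]
  nlinarith [sq_nonneg ‖fderiv ℝ u x₀ (EuclideanSpace.single 0 1)‖,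
    sq_nonneg ‖fderiv ℝ u x₀ (EuclideanSpace.single 1 1)‖, hip, hsum, ht0, ht1]
end
end

section
/- For every B > 0 there is a constant C > 0, depending only on W and B (and not on ε), such that the following holds: for every ε ∈ (0,1], every continuous φ : ℝ² → ℝ² with sup |φ| ≤ B, every continuous ψ : {x ∈ ℝ² : |x| ≤ 1/ε} → ℝ² with sup |ψ| ≤ B, and every bounded function h : {x : |x| ≤ 1/ε} × [0,∞) → ℝ², continuous on its domain and C² in x, C¹ in t on the open set {|x| < 1/ε} × (0,∞), satisfying ∂ₜh − Δh + ∇W(h)/2 = 0 for |x| < 1/ε and t > 0, h(x,t) = φ(x) whenever |x| = 1/ε, and h(x,0) = ψ(x), one has |h(x,t)| ≤ C for all x and all t ≥ 0. -/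
noncomputable section

open Real MeasureTheory Filter Metric Topology

open scoped RealInnerProductSpace

open Set in
lemma leftMaxTest {g : ℝ → ℝ} {d a : ℝ} (hg : HasDerivAt g d a)
    (hmax : ∀ᶠ t in 𝓝[<] a, g t ≤ g a) : 0 ≤ d := by
  have hslope : Tendsto (slope g a) (𝓝[<] a) (𝓝 d) :=
    (hasDerivAt_iff_tendsto_slope.1 hg).mono_left
      (nhdsWithin_mono _ (fun x hx => ne_of_lt hx))
  refine ge_of_tendsto hslope ?_
  filter_upwards [hmax, self_mem_nhdsWithin] with t ht ht'
  rw [slope_def_field]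
  have h1 : g t - g a ≤ 0 := by linarith
  have h2 : t - a < 0 := sub_neg.2 ht'
  have := div_nonneg (neg_nonneg.2 h1) (neg_nonneg.2 h2.le)
  rwa [neg_div_neg_eq] at this

open Set in
lemma secondDerivTest {g g' : ℝ → ℝ} {d η : ℝ} (hη : 0 < η)
    (hg : ∀ s ∈ Set.Ioo (-η) η, HasDerivAt g (g' s) s)
    (hg' : HasDerivAt g' d 0) (hmax : IsLocalMax g 0) : d ≤ 0 := by
  by_contra hd
  push_neg at hd
  have h0 : g' 0 = 0 := hmax.hasDerivAt_eq_zero (hg 0 ⟨neg_neg_iff_pos.2 hη, hη⟩)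
  -- g' is eventually positive on the right
  have hslope : Tendsto (slope g' 0) (𝓝[>] (0:ℝ)) (𝓝 d) :=
    (hasDerivAt_iff_tendsto_slope.1 hg').mono_left
      (nhdsWithin_mono _ (fun x hx => ne_of_gt hx))
  have hev : ∀ᶠ s in 𝓝[>] (0:ℝ), 0 < slope g' 0 s :=
    hslope.eventually (eventually_gt_nhds hd)
  have hev2 : ∀ᶠ s in 𝓝[>] (0:ℝ), 0 < g' s := by
    filter_upwards [hev, self_mem_nhdsWithin] with s hs hs'
    have : slope g' 0 s = g' s / s := by rw [slope_def_field, h0, sub_zero, sub_zero]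
    rw [this] at hs
    exact (div_pos_iff.1 hs).elim (fun h => h.1) (fun h => absurd h.2 (not_lt.2 hs'.le))
  obtain ⟨b, hb, hIoo⟩ := (mem_nhdsGT_iff_exists_Ioo_subset).1 hev2
  obtain ⟨r, hr, hball⟩ := Metric.eventually_nhds_iff.1 hmax
  set a := min (min b r) η / 2 with ha
  have hbpos : (0:ℝ) < b := hb
  have hm1 : min (min b r) η ≤ b := le_trans (min_le_left _ _) (min_le_left _ _)
  have hm2 : min (min b r) η ≤ r := le_trans (min_le_left _ _) (min_le_right _ _)
  have hm3 : min (min b r) η ≤ η := min_le_right _ _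
  have hmpos : 0 < min (min b r) η := lt_min (lt_min hbpos hr) hη
  have hapos : 0 < a := by positivity
  have hab : a < b := by simp only [ha]; linarith
  have har : a < r := by simp only [ha]; linarith
  have haη : a < η := by simp only [ha]; linarith
  have hsub : Icc (0:ℝ) a ⊆ Ioo (-η) η := fun s hs =>
    ⟨by linarith [hs.1], by linarith [hs.2]⟩
  have hmono : StrictMonoOn g (Icc (0:ℝ) a) := by
    apply strictMonoOn_of_deriv_pos (convex_Icc _ _)
    · intro s hs
      exact (hg s (hsub hs)).continuousAt.continuousWithinAt
    · intro s hs
      rw [interior_Icc] at hs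
      rw [(hg s (hsub ⟨hs.1.le, hs.2.le⟩)).deriv]
      exact hIoo ⟨hs.1, hs.2.trans hab⟩
  have hga : g 0 < g a := hmono ⟨le_refl _, hapos.le⟩ ⟨hapos.le, le_refl _⟩ hapos
  have : g a ≤ g 0 := hball (by rw [Real.dist_eq, sub_zero, abs_of_pos hapos]; exact har)
  linarith
open scoped RealInnerProductSpace

lemma grad_eq_fderiv (W : E2 → ℝ) (hW : Differentiable ℝ W) (p v : E2) :
    fderiv ℝ W p v = ⟪gradient W p, v⟫ := by
  have := ((hW p).hasGradientAt).hasFDerivAt.fderiv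
  rw [this]
  simp [InnerProductSpace.toDual_apply_apply]

lemma exists_rho (S : WPot) : ∃ ρ : ℝ, 0 < ρ ∧
    ∀ u : E2, ρ ≤ ‖u‖ → 0 ≤ ⟪gradient S.W u, u⟫ := by
  obtain ⟨m, hm⟩ := S.W_bddBelow
  have hWdiff : Differentiable ℝ S.W := S.W_smooth.differentiable (by norm_num)
  -- max of W on the K₀-ball
  obtain ⟨u₀, hu₀mem, hu₀max⟩ := (isCompact_closedBall (0:E2) S.K₀).exists_isMaxOn
    ⟨0, by simp [S.K₀_pos.le]⟩ S.W_smooth.continuous.continuousOn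
  set A := S.W u₀ with hA
  -- sublevel set is bounded
  have hcomp : IsCompact (S.W ⁻¹' (Set.Icc m (A + 1))) := S.W_proper _ isCompact_Icc
  obtain ⟨R, hR⟩ := hcomp.isBounded.subset_closedBall 0
  refine ⟨max (max R 0 + 1) (S.K₀ + 1), by positivity, ?_⟩
  intro u hu
  set s := ‖u‖ with hs
  have hspos : 0 < s := lt_of_lt_of_le (by positivity) hu
  have hsK : S.K₀ + 1 ≤ s := le_trans (le_max_right _ _) hu
  have hsR : max R 0 + 1 ≤ s := le_trans (le_max_left _ _) hu
  set ω := s⁻¹ • u with hω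
  have hωnorm : ‖ω‖ = 1 := by
    rw [hω, norm_smul, norm_inv, Real.norm_eq_abs, abs_of_pos hspos]
    field_simp
    exact hs.symm
  have hsmul : s • ω = u := by rw [hω, smul_smul, mul_inv_cancel₀ hspos.ne', one_smul]
  have hσnorm : ∀ σ : ℝ, ‖σ • ω‖ = |σ| := by
    intro σ; rw [norm_smul, hωnorm, Real.norm_eq_abs, mul_one]
  -- f and its derivatives
  set f : ℝ → ℝ := fun σ => S.W (σ • ω) with hf
  set F : ℝ → ℝ := fun σ => fderiv ℝ S.W (σ • ω) ω with hF
  have hline : ∀ σ : ℝ, HasDerivAt (fun σ : ℝ => σ • ω) ω σ := by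
    intro σ
    simpa using (hasDerivAt_id σ).smul_const ω
  have hfder : ∀ σ : ℝ, HasDerivAt f (F σ) σ := by
    intro σ
    exact ((hWdiff (σ • ω)).hasFDerivAt).comp_hasDerivAt σ (hline σ)
  have hC1 : ContDiff ℝ 1 (fderiv ℝ S.W) := S.W_smooth.fderiv_right (by norm_num)
  have hFder : ∀ σ : ℝ, HasDerivAt F ((fderiv ℝ (fderiv ℝ S.W) (σ • ω) ω) ω) σ := by
    intro σ
    have h1 : HasFDerivAt (fderiv ℝ S.W) (fderiv ℝ (fderiv ℝ S.W) (σ • ω)) (σ • ω) :=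
      (hC1.differentiable (by norm_num) (σ • ω)).hasFDerivAt
    have h2 := h1.comp_hasDerivAt σ (hline σ)
    have h3 := ((ContinuousLinearMap.apply ℝ ℝ ω).hasFDerivAt).comp_hasDerivAt σ h2
    exact h3
  have hhess : ∀ σ : ℝ, (fderiv ℝ (fderiv ℝ S.W) (σ • ω) ω) ω = hessQF S.W (σ • ω) ω := by
    intro σ
    rw [hessQF, iteratedFDeriv_two_apply]
    simp
  have hKs : S.K₀ < s := by linarith [S.K₀_pos]
  have hFmono : MonotoneOn F (Set.Icc S.K₀ s) := by
    apply monotoneOn_of_deriv_nonneg (convex_Icc _ _)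
    · exact fun σ _ => (hFder σ).continuousAt.continuousWithinAt
    · exact fun σ _ => (hFder σ).differentiableAt.differentiableWithinAt
    · intro σ hσ
      rw [interior_Icc] at hσ
      rw [(hFder σ).deriv, hhess]
      apply S.hess_psd
      rw [hσnorm, abs_of_pos (lt_trans S.K₀_pos hσ.1)]
      exact hσ.1.le
  obtain ⟨ξ, hξ, hξeq⟩ := exists_deriv_eq_slope f hKs
    (fun σ _ => (hfder σ).continuousAt.continuousWithinAt)
    (fun σ _ => (hfder σ).differentiableAt.differentiableWithinAt)
  rw [(hfder ξ).deriv] at hξeq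
  -- W u is above the sublevel set
  have hWu : A + 1 < S.W u := by
    have hnot : u ∉ Metric.closedBall (0:E2) R := by
      intro hmem
      rw [Metric.mem_closedBall, dist_zero_right] at hmem
      have : (R:ℝ) ≤ max R 0 := le_max_left _ _
      linarith
    have : u ∉ S.W ⁻¹' (Set.Icc m (A + 1)) := fun hmem => hnot (hR hmem)
    rw [Set.mem_preimage, Set.mem_Icc] at this
    push_neg at this
    exact this (hm u)
  have hfK : f S.K₀ ≤ A := by
    apply hu₀max
    rw [Metric.mem_closedBall, dist_zero_right, hσnorm, abs_of_pos S.K₀_pos]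
  have hfs : f s = S.W u := by rw [hf]; simp only [hsmul]
  have hslopepos : 0 < (f s - f S.K₀) / (s - S.K₀) := by
    apply div_pos ?_ (by linarith)
    rw [hfs]; linarith
  have hFs : 0 < F s := by
    have h1 : F ξ ≤ F s := hFmono ⟨hξ.1.le, hξ.2.le⟩ ⟨hKs.le, le_refl _⟩ hξ.2.le
    rw [hξeq] at h1
    linarith
  have hgoal : ⟪gradient S.W u, u⟫ = s * F s := by
    rw [← grad_eq_fderiv S.W hWdiff u u]
    have h4 : fderiv ℝ S.W u u = fderiv ℝ S.W u (s • ω) := by rw [hsmul]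
    rw [h4, ContinuousLinearMap.map_smul, smul_eq_mul, hF]
    simp only [hsmul]
  rw [hgoal]
  positivity

open scoped RealInnerProductSpace in
lemma interior_contradiction (S : WPot) {ρ : ℝ}
    (hρ : ∀ u : E2, ρ ≤ ‖u‖ → 0 ≤ ⟪gradient S.W u, u⟫)
    {ε δ T : ℝ} (hδ : 0 < δ)
    {h : E2 → ℝ → E2}
    (hx2 : ∀ t : ℝ, 0 < t → ContDiffOn ℝ 2 (fun x => h x t) (ball (0:E2) (1/ε)))
    (hdiff : ∀ x ∈ ball (0:E2) (1/ε), ∀ t : ℝ, 0 < t → DifferentiableAt ℝ (h x) t)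
    (hpde : ∀ x ∈ ball (0:E2) (1/ε), ∀ t : ℝ, 0 < t →
        deriv (h x) t - lapl (fun y => h y t) x + (2:ℝ)⁻¹ • gradient S.W (h x t) = 0)
    {x₀ : E2} {t₀ : ℝ} (hx₀ : x₀ ∈ ball (0:E2) (1/ε)) (ht₀ : 0 < t₀) (ht₀T : t₀ ≤ T)
    (hmax : IsMaxOn (fun p : E2 × ℝ => (⟪h p.1 p.2, h p.1 p.2⟫ : ℝ) - δ * p.2)
        (closedBall (0:E2) (1/ε) ×ˢ Set.Icc 0 T) (x₀, t₀))
    (hbig : ρ ≤ ‖h x₀ t₀‖) : False := by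
  set u : E2 → E2 := fun y => h y t₀ with hu
  set D : E2 := deriv (h x₀) t₀ with hD
  have hd : HasDerivAt (h x₀) D t₀ := (hdiff x₀ hx₀ t₀ ht₀).hasDerivAt
  -- time derivative inequality
  have htime : HasDerivAt (fun t => (⟪h x₀ t, h x₀ t⟫ : ℝ) - δ * t)
      ((⟪h x₀ t₀, D⟫ + ⟪D, h x₀ t₀⟫) - δ) t₀ := by
    have h1 := (hd.inner ℝ hd)
    have h2 : HasDerivAt (fun t : ℝ => δ * t) δ t₀ := by
      simpa using (hasDerivAt_id t₀).const_mul δ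
    exact h1.sub h2
  have hleft : ∀ᶠ s in 𝓝[<] t₀,
      (fun t => (⟪h x₀ t, h x₀ t⟫ : ℝ) - δ * t) s
        ≤ (fun t => (⟪h x₀ t, h x₀ t⟫ : ℝ) - δ * t) t₀ := by
    filter_upwards [Ioo_mem_nhdsLT_of_mem (Set.mem_Ioc.2 ⟨ht₀, le_refl t₀⟩)] with s hs
    exact hmax (Set.mk_mem_prod (ball_subset_closedBall hx₀)
      ⟨hs.1.le, le_trans hs.2.le ht₀T⟩)
  have h1 : 0 ≤ (⟪h x₀ t₀, D⟫ + ⟪D, h x₀ t₀⟫) - δ := leftMaxTest htime hleft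
  -- spatial second derivatives
  set η : ℝ := 1/ε - ‖x₀‖ with hη
  have hηpos : 0 < η := by
    rw [hη, sub_pos]
    exact mem_ball_zero_iff.1 hx₀
  have hC2 := hx2 t₀ ht₀
  have hCat : ∀ y ∈ ball (0:E2) (1/ε), ContDiffAt ℝ 2 u y :=
    fun y hy => hC2.contDiffAt (isOpen_ball.mem_nhds hy)
  have hudiff : ∀ y ∈ ball (0:E2) (1/ε), HasFDerivAt u (fderiv ℝ u y) y :=
    fun y hy => ((hCat y hy).differentiableAt (by norm_num)).hasFDerivAt
  have hfd2 : HasFDerivAt (fderiv ℝ u) (fderiv ℝ (fderiv ℝ u) x₀) x₀ :=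
    (((hCat x₀ hx₀).fderiv_right (m := 1) (le_refl 2)).differentiableAt one_ne_zero).hasFDerivAt
  have keyi : ∀ i : Fin 2,
      (⟪h x₀ t₀, fderiv ℝ (fun y => fderiv ℝ u y (EuclideanSpace.single i 1)) x₀
        (EuclideanSpace.single i 1)⟫ : ℝ) ≤ 0 := by
    intro i
    set e : E2 := EuclideanSpace.single i (1:ℝ) with he
    have hen : ‖e‖ = 1 := by rw [he, EuclideanSpace.norm_single]; norm_num
    set ℓ : ℝ → E2 := fun s => x₀ + s • e with hℓ
    have hl0 : ℓ 0 = x₀ := by simp [hℓ]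
    have hlmem : ∀ s ∈ Set.Ioo (-η) η, ℓ s ∈ ball (0:E2) (1/ε) := by
      intro s hs
      rw [mem_ball_zero_iff]
      calc ‖x₀ + s • e‖ ≤ ‖x₀‖ + ‖s • e‖ := norm_add_le _ _
        _ = ‖x₀‖ + |s| := by rw [norm_smul, hen, Real.norm_eq_abs, mul_one]
        _ < ‖x₀‖ + η := by
            apply add_lt_add_of_le_of_lt le_rfl
            exact abs_lt.2 ⟨hs.1, hs.2⟩
        _ = 1/ε := by rw [hη]; ring
    have hline : ∀ s : ℝ, HasDerivAt ℓ e s := by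
      intro s
      simpa [hℓ] using ((hasDerivAt_id s).smul_const e).const_add x₀
    set G : ℝ → ℝ := fun s => (⟪u (ℓ s), fderiv ℝ u (ℓ s) e⟫ : ℝ)
      + (⟪fderiv ℝ u (ℓ s) e, u (ℓ s)⟫ : ℝ) with hG
    have hg : ∀ s ∈ Set.Ioo (-η) η,
        HasDerivAt (fun s => (⟪u (ℓ s), u (ℓ s)⟫ : ℝ)) (G s) s := by
      intro s hs
      have hu1 : HasDerivAt (fun s => u (ℓ s)) (fderiv ℝ u (ℓ s) e) s :=
        (hudiff (ℓ s) (hlmem s hs)).comp_hasDerivAt s (hline s)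
      exact hu1.inner ℝ hu1
    set D₁ : E2 := fderiv ℝ u x₀ e with hD₁
    set D₂ : E2 := (fderiv ℝ (fderiv ℝ u) x₀ e) e with hD₂
    have hF2 : HasDerivAt (fun s => fderiv ℝ u (ℓ s) e) D₂ 0 := by
      have ha : HasFDerivAt (fderiv ℝ u) (fderiv ℝ (fderiv ℝ u) x₀) (ℓ 0) := by
        rw [hl0]; exact hfd2
      have hb := ha.comp_hasDerivAt 0 (hline 0)
      have hc := ((ContinuousLinearMap.apply ℝ E2 e).hasFDerivAt).comp_hasDerivAt 0 hb
      exact hc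
    have hU0 : HasDerivAt (fun s => u (ℓ s)) D₁ 0 := by
      have := (hudiff (ℓ 0) (by rw [hl0]; exact hx₀)).comp_hasDerivAt 0 (hline 0)
      rwa [hl0] at this
    have hGder : HasDerivAt G
        (((⟪u (ℓ 0), D₂⟫ : ℝ) + ⟪D₁, fderiv ℝ u (ℓ 0) e⟫)
          + ((⟪fderiv ℝ u (ℓ 0) e, D₁⟫ : ℝ) + ⟪D₂, u (ℓ 0)⟫)) 0 :=
      (hU0.inner ℝ hF2).add (hF2.inner ℝ hU0)
    have hlocmax : IsLocalMax (fun s => (⟪u (ℓ s), u (ℓ s)⟫ : ℝ)) 0 := by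
      filter_upwards [Ioo_mem_nhds (neg_neg_iff_pos.2 hηpos) hηpos] with s hs
      have hq : (ℓ s, t₀) ∈ closedBall (0:E2) (1/ε) ×ˢ Set.Icc 0 T :=
        Set.mk_mem_prod (ball_subset_closedBall (hlmem s hs)) ⟨ht₀.le, ht₀T⟩
      have := hmax hq
      simp only [hl0] at this ⊢
      simpa using this
    have hkey := secondDerivTest hηpos hg hGder hlocmax
    rw [hl0] at hkey
    have hcomm : (⟪D₂, u x₀⟫ : ℝ) = ⟪u x₀, D₂⟫ := real_inner_comm _ _
    have hcomm2 : (⟪D₁, D₁⟫ : ℝ) = ‖D₁‖^2 := real_inner_self_eq_norm_sq _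
    have hfeq : fderiv ℝ (fun y => fderiv ℝ u y e) x₀ e = D₂ := by
      have hcomp : HasFDerivAt (fun y => fderiv ℝ u y e)
          ((ContinuousLinearMap.apply ℝ E2 e).comp (fderiv ℝ (fderiv ℝ u) x₀)) x₀ :=
        ((ContinuousLinearMap.apply ℝ E2 e).hasFDerivAt).comp x₀ hfd2
      rw [hcomp.fderiv]
      rfl
    rw [hfeq]
    have e1 : (fderiv ℝ u x₀) e = D₁ := rfl
    rw [e1] at hkey
    have e2 : (⟪h x₀ t₀, D₂⟫ : ℝ) = ⟪u x₀, D₂⟫ := rfl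
    rw [e2]
    nlinarith [sq_nonneg ‖D₁‖, hkey, hcomm, hcomm2]
  -- laplacian inequality
  have hlap : (⟪h x₀ t₀, lapl u x₀⟫ : ℝ) ≤ 0 := by
    rw [lapl, inner_sum]
    exact Finset.sum_nonpos (fun i _ => keyi i)
  -- PDE
  have hpde0 := hpde x₀ hx₀ t₀ ht₀
  have hDeq : D = lapl u x₀ - (2:ℝ)⁻¹ • gradient S.W (h x₀ t₀) := by
    have : (D - lapl u x₀) = -((2:ℝ)⁻¹ • gradient S.W (h x₀ t₀)) :=
      eq_neg_of_add_eq_zero_left hpde0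
    rw [sub_eq_iff_eq_add] at this
    rw [this]; abel
  have hgradpos : (0:ℝ) ≤ ⟪h x₀ t₀, gradient S.W (h x₀ t₀)⟫ := by
    rw [real_inner_comm]
    exact hρ _ hbig
  have hDinner : (⟪h x₀ t₀, D⟫ : ℝ)
      = ⟪h x₀ t₀, lapl u x₀⟫ - (2:ℝ)⁻¹ * ⟪h x₀ t₀, gradient S.W (h x₀ t₀)⟫ := by
    rw [hDeq, inner_sub_right, real_inner_smul_right]
  have hcomm3 : (⟪D, h x₀ t₀⟫ : ℝ) = ⟪h x₀ t₀, D⟫ := real_inner_comm _ _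
  rw [hcomm3, hDinner] at h1
  linarith


theorem statement11 (S : WPot) : ∀ B : ℝ, 0 < B → ∃ C : ℝ, 0 < C ∧
    ∀ ε : ℝ, 0 < ε → ε ≤ 1 →
    ∀ φb : E2 → E2, Continuous φb → (∀ x : E2, ‖φb x‖ ≤ B) →
    ∀ ψ : E2 → E2, ContinuousOn ψ (closedBall (0:E2) (1 / ε)) →
      (∀ x ∈ closedBall (0:E2) (1 / ε), ‖ψ x‖ ≤ B) →
    ∀ h : E2 → ℝ → E2,
      (∃ M : ℝ, ∀ x ∈ closedBall (0:E2) (1 / ε), ∀ t : ℝ, 0 ≤ t → ‖h x t‖ ≤ M) →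
      ContinuousOn (fun p : E2 × ℝ => h p.1 p.2)
        (closedBall (0:E2) (1 / ε) ×ˢ Set.Ici 0) →
      (∀ t : ℝ, 0 < t → ContDiffOn ℝ 2 (fun x => h x t) (ball (0:E2) (1 / ε))) →
      (∀ x ∈ ball (0:E2) (1 / ε), ∀ t : ℝ, 0 < t → DifferentiableAt ℝ (h x) t) →
      (∀ x ∈ ball (0:E2) (1 / ε), ∀ t : ℝ, 0 < t →
        deriv (h x) t - lapl (fun y => h y t) x
          + (2:ℝ)⁻¹ • gradient S.W (h x t) = 0) →
      (∀ x : E2, ‖x‖ = 1 / ε → ∀ t : ℝ, 0 ≤ t → h x t = φb x) →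
      (∀ x ∈ closedBall (0:E2) (1 / ε), h x 0 = ψ x) →
      ∀ x ∈ closedBall (0:E2) (1 / ε), ∀ t : ℝ, 0 ≤ t → ‖h x t‖ ≤ C := by
  intro B hB
  obtain ⟨ρ, hρpos, hρ⟩ := exists_rho S
  refine ⟨max B ρ, lt_of_lt_of_le hB (le_max_left _ _), ?_⟩
  intro ε hε hε1 φb hφbc hφbB ψ hψc hψB h hbdd hcont hx2 hdiff hpde hbc hic x hx t ht
  have hRpos : (0:ℝ) < 1/ε := by positivity
  have hmaxsq : (max B ρ)^2 ≤ max (B^2) (ρ^2) := by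
    rcases le_total B ρ with hc | hc
    · rw [max_eq_right hc]; exact le_max_right _ _
    · rw [max_eq_left hc]; exact le_max_left _ _
  have key : ∀ δ : ℝ, 0 < δ →
      (⟪h x t, h x t⟫ : ℝ) - δ * t ≤ max (B^2) (ρ^2) := by
    intro δ hδ
    set vδ : E2 × ℝ → ℝ := fun p => (⟪h p.1 p.2, h p.1 p.2⟫ : ℝ) - δ * p.2 with hvδ
    set Q : Set (E2 × ℝ) := closedBall (0:E2) (1/ε) ×ˢ Set.Icc 0 t with hQ
    have hQsub : Q ⊆ closedBall (0:E2) (1/ε) ×ˢ Set.Ici 0 :=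
      Set.prod_mono_right (fun s hs => hs.1)
    have hQc : IsCompact Q := (isCompact_closedBall _ _).prod isCompact_Icc
    have hQne : Q.Nonempty := ⟨(0, 0), Set.mk_mem_prod (mem_closedBall_self hRpos.le)
      ⟨le_refl 0, ht⟩⟩
    have hvcont : ContinuousOn vδ Q := by
      apply ContinuousOn.sub
      · exact (hcont.mono hQsub).inner (hcont.mono hQsub)
      · exact (continuous_const.mul continuous_snd).continuousOn
    obtain ⟨⟨x₀, t₀⟩, hmem, hmax⟩ := hQc.exists_isMaxOn hQne hvcont
    have hx₀cb : x₀ ∈ closedBall (0:E2) (1/ε) := hmem.1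
    have ht₀Icc : t₀ ∈ Set.Icc 0 t := hmem.2
    have hbound : vδ (x₀, t₀) ≤ max (B^2) (ρ^2) := by
      by_cases hbig : ‖h x₀ t₀‖ ≤ max B ρ
      · have e1 : (⟪h x₀ t₀, h x₀ t₀⟫ : ℝ) = ‖h x₀ t₀‖^2 :=
          real_inner_self_eq_norm_sq _
        have e2 : ‖h x₀ t₀‖^2 ≤ (max B ρ)^2 :=
          pow_le_pow_left₀ (norm_nonneg _) hbig 2
        have e3 : 0 ≤ δ * t₀ := mul_nonneg hδ.le ht₀Icc.1
        simp only [hvδ]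
        rw [e1]
        linarith
      · exfalso
        push_neg at hbig
        have hhb : ρ ≤ ‖h x₀ t₀‖ := le_of_lt (lt_of_le_of_lt (le_max_right B ρ) hbig)
        rcases eq_or_lt_of_le ht₀Icc.1 with ht₀0 | ht₀pos
        · -- t₀ = 0 : initial condition
          have := hic x₀ hx₀cb
          rw [← ht₀0, this] at hbig
          exact absurd (le_trans (hψB x₀ hx₀cb) (le_max_left B ρ)) (not_le.2 hbig)
        rcases eq_or_lt_of_le (mem_closedBall_zero_iff.1 hx₀cb) with hxb | hxint
        · -- boundary
          have := hbc x₀ hxb t₀ ht₀Icc.1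
          rw [this] at hbig
          exact absurd (le_trans (hφbB x₀) (le_max_left B ρ)) (not_le.2 hbig)
        · exact interior_contradiction S hρ hδ hx2 hdiff hpde
            (mem_ball_zero_iff.2 hxint) ht₀pos ht₀Icc.2 hmax hhb
    have hxtQ : (x, t) ∈ Q := Set.mk_mem_prod hx ⟨ht, le_refl t⟩
    exact le_trans (hmax hxtQ) hbound
  have h2 : (⟪h x t, h x t⟫ : ℝ) ≤ max (B^2) (ρ^2) := by
    refine le_of_forall_pos_le_add ?_
    intro c hc
    have hk := key (c / (t+1)) (by positivity)
    have ht' : (c/(t+1)) * t ≤ c := by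
      rw [div_mul_eq_mul_div, div_le_iff₀ (by linarith)]
      nlinarith
    linarith
  have h3 : ‖h x t‖^2 ≤ (max B ρ)^2 := by
    rw [← real_inner_self_eq_norm_sq]
    rcases le_total B ρ with hc | hc
    · rw [max_eq_right hc]
      rw [max_eq_right (pow_le_pow_left₀ (by linarith) hc 2)] at h2
      exact h2
    · rw [max_eq_left hc]
      rw [max_eq_left (pow_le_pow_left₀ (by positivity) hc 2)] at h2
      exact h2
  have := Real.sqrt_le_sqrt h3
  rwa [Real.sqrt_sq (norm_nonneg _),
    Real.sqrt_sq (le_trans hB.le (le_max_left _ _))] at this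
end
end
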